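/- Along the two subsequences used in the proof of Theorem 1, the critical point coordinate satisfies: lim_{k→∞} (k*(⌊2^{k+1/2} k⌋) − k) = 1/2 and lim_{k→∞} (k*(2^k k) − k) = 0. -/

import Mathlib

open Filter Real

/-- The function `f(k,l)` from the proof of Theorem 1 (with parameter `n`):
`f(k,l) = (k+l+1)·ln n − k·ln k − l·ln l + k + l − ((k+l)²/2)·ln 2 − ((k+l)/2)·ln 2
          − (n−k−l)·(2^{−k} + 2^{−l})`, where `2^{−k} = exp(−k·ln 2)`. -/
noncomputable def f (n : ℕ) (k l : ℝ) : ℝ :=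
  (k + l + 1) * Real.log n - k * Real.log k - l * Real.log l + k + l
    - ((k + l) ^ 2 / 2) * Real.log 2 - ((k + l) / 2) * Real.log 2
    - ((n : ℝ) - k - l) * (Real.exp (-k * Real.log 2) + Real.exp (-l * Real.log 2))

/-- The region `R = {(k,l) : k ≥ 1, l ≥ 1, k + l ≤ n − 1}`. -/
def region (n : ℕ) : Set (ℝ × ℝ) :=
  {p : ℝ × ℝ | 1 ≤ p.1 ∧ 1 ≤ p.2 ∧ p.1 + p.2 ≤ (n : ℝ) - 1}

/-- `(k, l)` is a critical point of `f n`: both partial derivatives vanish. -/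
def IsCritPt (n : ℕ) (k l : ℝ) : Prop :=
  deriv (fun k' => f n k' l) k = 0 ∧ deriv (fun l' => f n k l') l = 0

/-!
Subtracting the two critical-point equations at `(k, l)` gives `φ k = φ l` for the strictly
increasing `φ x = log x - (n - k - l) log 2 · 2^{-x}`, so every critical point in the region lies
on the diagonal, where the critical-point equation reads `diagDeriv n x = 0`. This function is
strictly decreasing on `[1, n/2]`, positive at `1` and negative at `(n - 1)/2` for `n ≥ 16`; its
root is `k*(n)`. If `m k ~ 2^δ · 2^k k`, then
`diagDeriv (m k) (k + s) / k → log 2 · (2^{δ-s} - 1)`, which is positive for `s < δ` and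
negative for `s > δ`, so `k*(m k) - k → δ`. The two subsequences have `δ = 1/2` and `δ = 0`.
-/

open Set

noncomputable def fDerivFst (n : ℕ) (k l : ℝ) : ℝ :=
  log n - log k - (k + l) * log 2 - log 2 / 2 + (exp (-k * log 2) + exp (-l * log 2))
    + ((n : ℝ) - k - l) * log 2 * exp (-k * log 2)

lemma hasDerivAt_f_fst (n : ℕ) (l : ℝ) {k : ℝ} (hk : k ≠ 0) :
    HasDerivAt (fun k' => f n k' l) (fDerivFst n k l) k := by
  have hE : HasDerivAt (fun x => exp (-x * log 2)) (exp (-k * log 2) * (-1 * log 2)) k :=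
    ((hasDerivAt_neg k).mul_const _).exp
  have hx : HasDerivAt (fun x : ℝ => x + l) 1 k := (hasDerivAt_id k).add_const l
  have := ((((hx.add_const 1).mul_const (log n)).sub (hasDerivAt_mul_log hk)).sub_const
    (l * log l) |>.add hx |>.sub ((hx.pow 2).div_const 2 |>.mul_const (log 2))
    |>.sub (hx.div_const 2 |>.mul_const (log 2))).sub
    ((hx.const_sub (n : ℝ)).mul (hE.add_const (exp (-l * log 2))))
  refine (this.congr_deriv ?_).congr_of_eventuallyEq (.of_forall fun x => ?_)
  · simp only [fDerivFst]; ring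
  · simp only [f, Pi.add_apply, Pi.sub_apply, Pi.mul_apply, Pi.pow_apply]; ring

lemma f_comm (n : ℕ) (k l : ℝ) : f n k l = f n l k := by
  simp only [f]; ring

lemma isCritPt_iff {n : ℕ} {k l : ℝ} (hk : k ≠ 0) (hl : l ≠ 0) :
    IsCritPt n k l ↔ fDerivFst n k l = 0 ∧ fDerivFst n l k = 0 := by
  simp only [IsCritPt, f_comm n k, (hasDerivAt_f_fst n l hk).deriv,
    (hasDerivAt_f_fst n k hl).deriv]

lemma strictMonoOn_log_sub_mul_exp {c : ℝ} (hc : 0 ≤ c) :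
    StrictMonoOn (fun x => log x - c * exp (-x * log 2)) (Ioi 0) :=
  fun x hx y hy hxy => by
    have := Real.strictMonoOn_log hx hy hxy
    have : c * exp (-y * log 2) ≤ c * exp (-x * log 2) := by gcongr
    dsimp only
    linarith

lemma eq_of_fDerivFst_eq_zero {n : ℕ} {k l : ℝ} (hk : 0 < k) (hl : 0 < l)
    (hkl : k + l ≤ n) (h₁ : fDerivFst n k l = 0) (h₂ : fDerivFst n l k = 0) : k = l := by
  have hc : 0 ≤ ((n : ℝ) - k - l) * log 2 := by
    have := Real.log_pos one_lt_two
    nlinarith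
  refine (strictMonoOn_log_sub_mul_exp hc).injOn hk hl ?_
  simp only [fDerivFst] at h₁ h₂
  linear_combination h₂ - h₁

noncomputable def diagDeriv (n : ℕ) (x : ℝ) : ℝ :=
  log n - log x - (2 * x + 1 / 2) * log 2
    + (2 + ((n : ℝ) - 2 * x) * log 2) * exp (-x * log 2)

lemma fDerivFst_self (n : ℕ) (x : ℝ) : fDerivFst n x x = diagDeriv n x := by
  simp only [fDerivFst, diagDeriv]; ring

lemma strictAntiOn_diagDeriv (n : ℕ) : StrictAntiOn (diagDeriv n) (Icc 1 ((n : ℝ) / 2)) := by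
  intro x ⟨hx1, _⟩ y ⟨_, hy2⟩ hxy
  have hlog : log x < log y := Real.log_lt_log (by linarith) hxy
  have hl2 : 0 < log 2 := Real.log_pos one_lt_two
  have hprod : (2 + ((n : ℝ) - 2 * y) * log 2) * exp (-y * log 2)
      ≤ (2 + ((n : ℝ) - 2 * x) * log 2) * exp (-x * log 2) :=
    mul_le_mul (by nlinarith) (by gcongr) (Real.exp_pos _).le (by nlinarith)
  simp only [diagDeriv]
  nlinarith

lemma continuousOn_diagDeriv (n : ℕ) : ContinuousOn (diagDeriv n) (Ici 1) := by
  intro x (hx : 1 ≤ x)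
  have : ContinuousAt log x := Real.continuousAt_log (by positivity)
  unfold diagDeriv
  exact ContinuousAt.continuousWithinAt (by fun_prop)

lemma diagDeriv_one_pos {n : ℕ} (hn : 16 ≤ n) : 0 < diagDeriv n 1 := by
  have hn' : (16 : ℝ) ≤ n := by exact_mod_cast hn
  have hE : exp (-1 * log 2) = 1 / 2 := by
    rw [neg_one_mul, Real.exp_neg, Real.exp_log two_pos, one_div]
  have : log 16 ≤ log n := Real.log_le_log (by norm_num) hn'
  have h16 : log 16 = 4 * log 2 := by
    rw [show (16 : ℝ) = 2 ^ 4 by norm_num, Real.log_pow]; norm_num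
  have := Real.log_two_gt_d9
  simp only [diagDeriv, hE, Real.log_one]
  nlinarith

lemma diagDeriv_half_sub_one_neg {n : ℕ} (hn : 16 ≤ n) :
    diagDeriv n (((n : ℝ) - 1) / 2) < 0 := by
  have hn' : (16 : ℝ) ≤ n := by exact_mod_cast hn
  have hl2 := Real.log_two_gt_d9
  have hE : exp (-(((n : ℝ) - 1) / 2) * log 2) ≤ 1 := by
    rw [Real.exp_le_one_iff]; nlinarith
  have h4 : log 4 = 2 * log 2 := by
    rw [show (4 : ℝ) = 2 ^ 2 by norm_num, Real.log_pow]; norm_num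
  have hlog : log n ≤ 2 * log 2 + log (((n : ℝ) - 1) / 2) :=
    calc log n ≤ log (4 * (((n : ℝ) - 1) / 2)) :=
          Real.log_le_log (by linarith) (by linarith)
      _ = 2 * log 2 + log (((n : ℝ) - 1) / 2) := by
          rw [Real.log_mul (by norm_num) (by linarith), h4]
  simp only [diagDeriv]
  nlinarith [Real.exp_pos (-(((n : ℝ) - 1) / 2) * log 2)]

lemma exists_diagDeriv_eq_zero {n : ℕ} (hn : 16 ≤ n) :
    ∃ x ∈ Icc (1 : ℝ) (((n : ℝ) - 1) / 2), diagDeriv n x = 0 := by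
  have hn' : (16 : ℝ) ≤ n := by exact_mod_cast hn
  exact intermediate_value_Icc' (by linarith) ((continuousOn_diagDeriv n).mono Icc_subset_Ici_self)
    ⟨(diagDeriv_half_sub_one_neg hn).le, (diagDeriv_one_pos hn).le⟩

open Classical in
noncomputable def kstar (n : ℕ) : ℝ :=
  if h : ∃ x ∈ Icc (1 : ℝ) (((n : ℝ) - 1) / 2), diagDeriv n x = 0 then h.choose else 1

lemma kstar_spec {n : ℕ} (hn : 16 ≤ n) :
    kstar n ∈ Icc (1 : ℝ) (((n : ℝ) - 1) / 2) ∧ diagDeriv n (kstar n) = 0 := by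
  have h := exists_diagDeriv_eq_zero hn
  rw [kstar, dif_pos h]
  exact h.choose_spec

lemma kstar_mem_Icc_half {n : ℕ} (hn : 16 ≤ n) : kstar n ∈ Icc (1 : ℝ) ((n : ℝ) / 2) :=
  Icc_subset_Icc le_rfl (by linarith) (kstar_spec hn).1

lemma eq_kstar_of_diagDeriv_eq_zero {n : ℕ} (hn : 16 ≤ n) {x : ℝ}
    (hx : x ∈ Icc (1 : ℝ) ((n : ℝ) / 2)) (h : diagDeriv n x = 0) : x = kstar n :=
  (strictAntiOn_diagDeriv n).injOn hx (kstar_mem_Icc_half hn) (h.trans (kstar_spec hn).2.symm)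

lemma lt_kstar_of_diagDeriv_pos {n : ℕ} (hn : 16 ≤ n) {x : ℝ} (hx : x ≤ (n : ℝ) / 2)
    (h : 0 < diagDeriv n x) : x < kstar n := by
  by_contra! hle
  have hmem := kstar_mem_Icc_half hn
  have := (strictAntiOn_diagDeriv n).antitoneOn hmem ⟨hmem.1.trans hle, hx⟩ hle
  linarith [(kstar_spec hn).2]

lemma kstar_lt_of_diagDeriv_neg {n : ℕ} (hn : 16 ≤ n) {x : ℝ} (hx : 1 ≤ x)
    (h : diagDeriv n x < 0) : kstar n < x := by
  by_contra! hle
  have hmem := kstar_mem_Icc_half hn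
  have := (strictAntiOn_diagDeriv n).antitoneOn ⟨hx, hle.trans hmem.2⟩ hmem hle
  linarith [(kstar_spec hn).2]

lemma kstar_isUniqueCritPt {n : ℕ} (hn : 16 ≤ n) :
    (kstar n, kstar n) ∈ region n ∧ IsCritPt n (kstar n) (kstar n) ∧
      ∀ k l : ℝ, (k, l) ∈ region n → IsCritPt n k l → k = kstar n ∧ l = kstar n := by
  obtain ⟨⟨h1, h2⟩, h0⟩ := kstar_spec hn
  have hne : kstar n ≠ 0 := by positivity
  refine ⟨⟨h1, h1, by linarith⟩, ?_, ?_⟩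
  · rw [isCritPt_iff hne hne, fDerivFst_self]
    exact ⟨h0, h0⟩
  · rintro k l ⟨hk, hl, hkl⟩ hcrit
    rw [isCritPt_iff (by positivity) (by positivity)] at hcrit
    obtain rfl := eq_of_fDerivFst_eq_zero (by positivity) (by positivity) (by linarith)
      hcrit.1 hcrit.2
    have := eq_kstar_of_diagDeriv_eq_zero hn ⟨hk, by linarith⟩ (fDerivFst_self n k ▸ hcrit.1)
    exact ⟨this, this⟩

lemma diagDeriv_natCast_add_div {m k : ℕ} (hm : 0 < m) (hk : 0 < k) (s : ℝ) :
    diagDeriv m (k + s) / k =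
      log 2 * ((m : ℝ) / (2 ^ k * k) * exp (-s * log 2) - 1)
        + (log ((m : ℝ) / (2 ^ k * k)) - (log (k + s) - log k)
            - (2 * s + 1 / 2) * log 2) / k
        + exp (-(k + s) * log 2) * (2 / k - 2 * log 2 * (1 + s / k)) := by
  have hk' : (0 : ℝ) < k := by exact_mod_cast hk
  have hm' : (0 : ℝ) < m := by exact_mod_cast hm
  have h2k : exp (-(k + s) * log 2) * 2 ^ k = exp (-s * log 2) := by
    rw [← Real.exp_log (pow_pos two_pos k : (0 : ℝ) < 2 ^ k), ← Real.exp_add, Real.log_pow]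
    ring_nf
  have hlog : log ((m : ℝ) / (2 ^ k * k)) = log m - k * log 2 - log k := by
    rw [Real.log_div hm'.ne' (by positivity), Real.log_mul (by positivity) hk'.ne',
      Real.log_pow]
    ring
  rw [hlog, ← h2k]
  simp only [diagDeriv]
  field_simp
  ring

section Asymptotics

variable {m : ℕ → ℕ} {c : ℝ}

lemma eventually_pos_of_tendsto_ratio
    (hm : Tendsto (fun k : ℕ => (m k : ℝ) / (2 ^ k * k)) atTop (nhds c)) (hc : 0 < c) :
    ∀ᶠ k in atTop, 0 < m k := by
  filter_upwards [hm.eventually (lt_mem_nhds hc)] with k hk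
  refine Nat.pos_of_ne_zero fun h => ?_
  simp [h] at hk

lemma tendsto_diagDeriv_natCast_add_div
    (hm : Tendsto (fun k : ℕ => (m k : ℝ) / (2 ^ k * k)) atTop (nhds c)) (hc : 0 < c)
    (s : ℝ) :
    Tendsto (fun k : ℕ => diagDeriv (m k) (k + s) / k) atTop
      (nhds (log 2 * (c * exp (-s * log 2) - 1))) := by
  have hk : Tendsto (fun k : ℕ => (k : ℝ)) atTop atTop := tendsto_natCast_atTop_atTop
  have hmain := ((hm.mul_const (exp (-s * log 2))).sub_const 1).const_mul (log 2)
  have hlower : Tendsto (fun k : ℕ => (log ((m k : ℝ) / (2 ^ k * k))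
      - (log (k + s) - log k) - (2 * s + 1 / 2) * log 2) / k) atTop (nhds 0) :=
    (((hm.log hc.ne').sub ((Real.tendsto_log_comp_add_sub_log s).comp hk)).sub_const _).div_atTop hk
  have hexp : Tendsto (fun k : ℕ => exp (-(k + s) * log 2)) atTop (nhds 0) :=
    Real.tendsto_exp_atBot.comp <| (tendsto_atBot_add_const_right _ (-s)
      (tendsto_neg_atTop_atBot.comp hk)).atBot_mul_const (Real.log_pos one_lt_two) |>.congr
      fun k => by simp only [Function.comp]; ring
  have hbdd : Tendsto (fun k : ℕ => 2 / (k : ℝ) - 2 * log 2 * (1 + s / k)) atTop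
      (nhds (0 - 2 * log 2 * (1 + 0))) :=
    (tendsto_const_div_atTop_nhds_zero_nat 2).sub
      (((tendsto_const_div_atTop_nhds_zero_nat s).const_add 1).const_mul _)
  have := (hmain.add hlower).add (hexp.mul hbdd)
  rw [zero_mul, add_zero, add_zero] at this
  refine this.congr' ?_
  filter_upwards [eventually_pos_of_tendsto_ratio hm hc, eventually_gt_atTop 0] with k hmk hk
  exact (diagDeriv_natCast_add_div hmk hk s).symm

lemma eventually_four_mul_le
    (hm : Tendsto (fun k : ℕ => (m k : ℝ) / (2 ^ k * k)) atTop (nhds c)) (hc : 0 < c) :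
    ∀ᶠ k : ℕ in atTop, 4 * (k : ℝ) ≤ m k := by
  have := hm.pos_mul_atTop hc (tendsto_pow_atTop_atTop_of_one_lt (one_lt_two (α := ℝ)))
  filter_upwards [this.eventually_ge_atTop 4, eventually_gt_atTop 0] with k hk hk0
  have hk0' : (0 : ℝ) < k := by exact_mod_cast hk0
  rw [div_mul_eq_mul_div, mul_comm (2 ^ k : ℝ) k, mul_div_mul_right _ _ (by positivity),
    le_div_iff₀ hk0'] at hk
  linarith

lemma tendsto_kstar_sub_of_tendsto_ratio {δ : ℝ}
    (hm : Tendsto (fun k : ℕ => (m k : ℝ) / (2 ^ k * k)) atTop (nhds ((2 : ℝ) ^ δ))) :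
    Tendsto (fun k : ℕ => kstar (m k) - k) atTop (nhds δ) := by
  have hc : (0 : ℝ) < 2 ^ δ := by positivity
  have hlim (s : ℝ) : Tendsto (fun k : ℕ => diagDeriv (m k) (k + s) / k) atTop
      (nhds (log 2 * ((2 : ℝ) ^ (δ - s) - 1))) := by
    convert tendsto_diagDeriv_natCast_add_div hm hc s using 3
    rw [Real.rpow_sub two_pos, Real.rpow_def_of_pos two_pos, Real.rpow_def_of_pos two_pos,
      div_eq_mul_inv, ← Real.exp_neg]
    ring_nf
  have hl2 : 0 < log 2 := Real.log_pos one_lt_two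
  have hlarge : ∀ s : ℝ, ∀ᶠ k : ℕ in atTop,
      16 ≤ m k ∧ 1 ≤ (k : ℝ) + s ∧ (k : ℝ) + s ≤ m k / 2 := by
    intro s
    filter_upwards [eventually_four_mul_le hm hc, eventually_ge_atTop 4,
      eventually_ge_atTop ⌈|s| + 1⌉₊] with k h4 hk4 hks
    have hk4' : (4 : ℝ) ≤ k := by exact_mod_cast hk4
    have hks' : |s| + 1 ≤ k := Nat.ceil_le.mp hks
    refine ⟨by exact_mod_cast (by linarith : (16 : ℝ) ≤ m k), ?_, ?_⟩ <;>
      linarith [neg_abs_le s, le_abs_self s]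
  refine tendsto_order.2 ⟨fun a ha => ?_, fun b hb => ?_⟩
  · have hpos := (hlim a).eventually (lt_mem_nhds
      (mul_pos hl2 (sub_pos.2 (Real.one_lt_rpow one_lt_two (sub_pos.2 ha)))))
    filter_upwards [hpos, hlarge a, eventually_gt_atTop 0] with k hG ⟨hm16, _, hle⟩ hk
    have := lt_kstar_of_diagDeriv_pos hm16 hle
      ((div_pos_iff_of_pos_right (by exact_mod_cast hk)).1 hG)
    linarith
  · have hneg := (hlim b).eventually (gt_mem_nhds
      (mul_neg_of_pos_of_neg hl2 (sub_neg.2 (Real.rpow_lt_one_of_one_lt_of_neg one_lt_two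
        (sub_neg.2 hb)))))
    filter_upwards [hneg, hlarge b] with k hG ⟨hm16, hge, _⟩
    have := kstar_lt_of_diagDeriv_neg hm16 hge (neg_of_div_neg_left hG k.cast_nonneg)
    linarith

end Asymptotics

lemma tendsto_floor_two_rpow_add_half_mul_div :
    Tendsto (fun k : ℕ => (⌊(2 : ℝ) ^ ((k : ℝ) + 1/2) * k⌋₊ : ℝ) / (2 ^ k * k)) atTop
      (nhds ((2 : ℝ) ^ (1/2 : ℝ))) := by
  have hy (k : ℕ) : (2 : ℝ) ^ ((k : ℝ) + 1/2) * k = 2 ^ (1/2 : ℝ) * (2 ^ k * k) := by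
    rw [Real.rpow_add two_pos, Real.rpow_natCast]; ring
  have hlim : Tendsto (fun k : ℕ => (2 : ℝ) ^ ((k : ℝ) + 1/2) * k) atTop atTop := by
    simp only [hy]
    exact ((tendsto_pow_atTop_atTop_of_one_lt one_lt_two).atTop_mul_atTop₀
      tendsto_natCast_atTop_atTop).const_mul_atTop (by positivity)
  have := (tendsto_nat_floor_div_atTop.comp hlim).mul_const ((2 : ℝ) ^ (1/2 : ℝ))
  rw [one_mul] at this
  refine this.congr' ((eventually_gt_atTop 0).mono fun k hk => ?_)
  have : (0 : ℝ) < k := by exact_mod_cast hk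
  simp only [Function.comp, hy]
  field_simp

lemma tendsto_two_pow_mul_div :
    Tendsto (fun k : ℕ => ((2 ^ k * k : ℕ) : ℝ) / (2 ^ k * k)) atTop
      (nhds ((2 : ℝ) ^ (0 : ℝ))) := by
  rw [Real.rpow_zero]
  refine tendsto_const_nhds.congr' ((eventually_gt_atTop 0).mono fun k hk => ?_)
  have : (0 : ℝ) < k := by exact_mod_cast hk
  push_cast
  field_simp

/-- With `(k*(n), k*(n))` the (unique) critical point of `f` in the
region `R` for all sufficiently large `n`:
`k*(⌊2^{k+1/2} k⌋) − k → 1/2` and `k*(2^k k) − k → 0` as `k → ∞`. -/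
theorem kstar_asymptotics_along_subsequences :
    ∃ (kstar : ℕ → ℝ) (N : ℕ),
      (∀ n : ℕ, N ≤ n →
        (kstar n, kstar n) ∈ region n ∧ IsCritPt n (kstar n) (kstar n) ∧
          ∀ k l : ℝ, (k, l) ∈ region n → IsCritPt n k l → k = kstar n ∧ l = kstar n) ∧
      Tendsto (fun k : ℕ => kstar ⌊(2 : ℝ) ^ ((k : ℝ) + 1/2) * k⌋₊ - (k : ℝ))
        atTop (nhds (1/2)) ∧
      Tendsto (fun k : ℕ => kstar (2 ^ k * k) - (k : ℝ)) atTop (nhds 0) :=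
  ⟨kstar, 16, fun _ hn => kstar_isUniqueCritPt hn,
    tendsto_kstar_sub_of_tendsto_ratio tendsto_floor_two_rpow_add_half_mul_div,
    tendsto_kstar_sub_of_tendsto_ratio tendsto_two_pow_mul_div⟩
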